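/- Let F be a field and f : Σ* → F a word function recognized by a weighted automaton of size r over F. Then the Hankel matrix H(f), the infinite matrix indexed by pairs of words (u,v) with entry H(f)_{u,v} = f(u ∘ v), has rank at most r: every finite submatrix of H(f) has rank at most r. -/

import Mathlib

open Matrix

def wordProd {S : Type*} [CommSemiring S] {A : Type*} {r : ℕ}
    (μ : A → Matrix (Fin r) (Fin r) S) (w : List A) : Matrix (Fin r) (Fin r) S :=
  (w.map μ).prod

/-!
Row `u` of the Hankel matrix is the function recognized by the automaton whose initial vector
`α` has been replaced by the state vector `α μ(u)`. Recognition is linear in the initial vector,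
so every row lies in the image of a linear map out of `F^r`, a space of dimension `r`.
-/

section WeightedAutomaton

variable {S A : Type*} [CommSemiring S] {r : ℕ} (μ : A → Matrix (Fin r) (Fin r) S)

theorem wordProd_append (u v : List A) :
    wordProd μ (u ++ v) = wordProd μ u * wordProd μ v := by
  simp [wordProd]

/-- `x ↦ (w ↦ x μ(w) γ)`: the word function recognized with initial vector `x`. -/
def recognizedLinearMap (γ : Fin r → S) : (Fin r → S) →ₗ[S] (List A → S) where
  toFun x w := x ⬝ᵥ (wordProd μ w *ᵥ γ)
  map_add' x y := by
    funext w
    simp [add_dotProduct]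
  map_smul' c x := by
    funext w
    simp [smul_dotProduct]

theorem recognizedLinearMap_apply (γ x : Fin r → S) (w : List A) :
    recognizedLinearMap μ γ x w = x ⬝ᵥ (wordProd μ w *ᵥ γ) :=
  rfl

theorem recognizedLinearMap_vecMul_wordProd (γ x : Fin r → S) (u v : List A) :
    recognizedLinearMap μ γ (x ᵥ* wordProd μ u) v = recognizedLinearMap μ γ x (u ++ v) := by
  simp only [recognizedLinearMap_apply, wordProd_append, ← mulVec_mulVec, dotProduct_mulVec]

end WeightedAutomaton

theorem hankel_rank_le_of_recognizable_general {F A : Type*} [Field F] {r : ℕ}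
    (α γ : Fin r → F) (μ : A → Matrix (Fin r) (Fin r) F) (f : List A → F)
    (hf : ∀ w : List A, f w = α ⬝ᵥ (wordProd μ w *ᵥ γ)) :
    ∀ u : Fin (r + 1) → List A,
      ¬ LinearIndependent F (fun i : Fin (r + 1) => (fun v : List A => f (u i ++ v))) := by
  intro u hrows
  have hfactor : (fun i : Fin (r + 1) => fun v : List A => f (u i ++ v)) =
      recognizedLinearMap μ γ ∘ fun i => α ᵥ* wordProd μ (u i) := by
    funext i v
    rw [Function.comp_apply, recognizedLinearMap_vecMul_wordProd, recognizedLinearMap_apply, hf]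
  rw [hfactor] at hrows
  simpa using (hrows.of_comp _).fintype_card_le_finrank

/-- If `f` is recognized by a weighted automaton of size `r` over a field, then its
Hankel matrix has rank at most `r`: any `r+1` rows are linearly dependent. -/
theorem hankel_rank_le_of_recognizable {F A : Type*} [Field F] [Fintype A] {r : ℕ}
    (α γ : Fin r → F) (μ : A → Matrix (Fin r) (Fin r) F) (f : List A → F)
    (hf : ∀ w : List A, f w = α ⬝ᵥ (wordProd μ w *ᵥ γ)) :
    ∀ u : Fin (r + 1) → List A,
      ¬ LinearIndependent F (fun i : Fin (r + 1) => (fun v : List A => f (u i ++ v))) :=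
  hankel_rank_le_of_recognizable_general α γ μ f hf
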